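/- Let 𝓕 be an ω-closed family of subsets of ℕ with ∅ ∉ 𝓕. Then there exists a multiplication-preserving bijection from S(𝓕) onto the extended bicyclic semigroup B_ℤ if and only if 𝓕 = {F} for a single nonempty inductive subset F of ℕ (F is inductive if i ∈ F implies i + 1 ∈ F). -/

import Mathlib

/-- `zshift n F = {n + k : k ∈ F}`. -/
def zshift (n : ℤ) (F : Set ℤ) : Set ℤ := {m : ℤ | ∃ k ∈ F, m = n + k}

/-- A family of subsets of `ℕ` (viewed as subsets of `ℤ`) is `ω`-closed if it consists of
sets of nonnegative integers and `F₁ ∩ (-n + F₂)` belongs to the family for all `n : ℕ`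
and all members `F₁, F₂` of the family. -/
def OmegaClosed (𝓕 : Set (Set ℤ)) : Prop :=
  (∀ F ∈ 𝓕, ∀ x ∈ F, 0 ≤ x) ∧
    ∀ n : ℕ, ∀ F₁ ∈ 𝓕, ∀ F₂ ∈ 𝓕, F₁ ∩ zshift (-(n : ℤ)) F₂ ∈ 𝓕

/-- The binary operation on triples `(i, j, F)`:
`(i₁,j₁,F₁)·(i₂,j₂,F₂) = (i₁−j₁+i₂, j₂, (j₁−i₂+F₁) ∩ F₂)` if `j₁ < i₂`;
`(i₁, j₂, F₁ ∩ F₂)` if `j₁ = i₂`; `(i₁, j₁−i₂+j₂, F₁ ∩ (i₂−j₁+F₂))` if `j₁ > i₂`. -/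
def smul3 (x y : ℤ × ℤ × Set ℤ) : ℤ × ℤ × Set ℤ :=
  if x.2.1 < y.1 then
    (x.1 - x.2.1 + y.1, y.2.1, zshift (x.2.1 - y.1) x.2.2 ∩ y.2.2)
  else if x.2.1 = y.1 then
    (x.1, y.2.1, x.2.2 ∩ y.2.2)
  else
    (x.1, x.2.1 - y.1 + y.2.1, x.2.2 ∩ zshift (y.1 - x.2.1) y.2.2)

/-- The carrier of the semigroup `S(𝓕)`: all triples whose third component lies in `𝓕`. -/
def Scar (𝓕 : Set (Set ℤ)) : Set (ℤ × ℤ × Set ℤ) := {x | x.2.2 ∈ 𝓕}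

/-- The operation of the extended bicyclic semigroup `B_ℤ` on `ℤ × ℤ`. -/
def bmul (p q : ℤ × ℤ) : ℤ × ℤ :=
  (p.1 + q.1 - min p.2 q.1, p.2 + q.2 - min p.2 q.1)

/-! An isomorphism `g : S(𝓕) → B_ℤ` sends idempotents `(k, k, F)` to diagonal elements `(d, d)`,
and diagonal idempotents of `B_ℤ` multiply by taking the maximum. Comparing `(1,1,F)·(0,0,F)`
with the images of its factors forces `F ∩ (-1 + F) = F`, i.e. `F` is inductive. Since `B_ℤ`
is bisimple, any two idempotents `(0,0,F₁)`, `(0,0,F₂)` are 𝒟-related in `S(𝓕)`, and unwinding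
the multiplication table shows this forces `F₁ = F₂`. Conversely, if `𝓕 = {F}` the projection
`(i, j, F) ↦ (i, j)` is an isomorphism, because the first two coordinates of `smul3` are
computed by `bmul`. -/

lemma mem_zshift {n m : ℤ} {F : Set ℤ} : m ∈ zshift n F ↔ m - n ∈ F := by
  constructor
  · rintro ⟨k, hk, rfl⟩
    simpa using hk
  · exact fun h => ⟨m - n, h, by ring⟩

lemma zshift_zero (F : Set ℤ) : zshift 0 F = F := by
  ext m
  simp [mem_zshift]

lemma smul3_mem_scar {𝓕 : Set (Set ℤ)} (h𝓕 : OmegaClosed 𝓕) {x y : ℤ × ℤ × Set ℤ}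
    (hx : x ∈ Scar 𝓕) (hy : y ∈ Scar 𝓕) : smul3 x y ∈ Scar 𝓕 := by
  obtain ⟨-, hclosed⟩ := h𝓕
  unfold Scar smul3
  split_ifs with hlt heq
  · have := hclosed (y.1 - x.2.1).toNat y.2.2 hy x.2.2 hx
    rw [Int.toNat_of_nonneg (by omega), neg_sub] at this
    simpa [Set.inter_comm] using this
  · simpa [zshift_zero] using hclosed 0 x.2.2 hx y.2.2 hy
  · have := hclosed (x.2.1 - y.1).toNat x.2.2 hx y.2.2 hy
    rw [Int.toNat_of_nonneg (by omega), neg_sub] at this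
    simpa using this

lemma bmul_proj_smul3 (x y : ℤ × ℤ × Set ℤ) :
    bmul (x.1, x.2.1) (y.1, y.2.1) = ((smul3 x y).1, (smul3 x y).2.1) := by
  unfold smul3 bmul
  split_ifs <;> simp only [Prod.mk.injEq] <;> omega

lemma fst_eq_snd_of_bmul_self {p : ℤ × ℤ} (hp : bmul p p = p) : p.1 = p.2 := by
  simp only [bmul, Prod.ext_iff] at hp
  omega

lemma bmul_diag_diag (a b : ℤ) : bmul (a, a) (b, b) = (max a b, max a b) := by
  simp only [bmul, Prod.mk.injEq]
  omega

lemma smul3_diag_self (k : ℤ) (F : Set ℤ) : smul3 (k, k, F) (k, k, F) = (k, k, F) := by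
  simp [smul3]

lemma smul3_one_zero (F : Set ℤ) : smul3 (1, 1, F) (0, 0, F) = (1, 1, F ∩ zshift (-1) F) := by
  simp [smul3]

lemma add_one_mem_of_inter_zshift_eq {F : Set ℤ} (hF : F ∩ zshift (-1) F = F) {i : ℤ}
    (hi : i ∈ F) : i + 1 ∈ F := by
  rw [← hF] at hi
  simpa using mem_zshift.mp hi.2

/-- Here `x` and `y` witness that the idempotents `(0,0,F₁)` and `(0,0,F₂)` are 𝒟-related. -/
lemma subset_of_smul3_dRel {F₁ F₂ : Set ℤ} {x y : ℤ × ℤ × Set ℤ}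
    (h₁ : smul3 (0, 0, F₁) x = x) (h₂ : smul3 x (0, 0, F₂) = x)
    (hxy : smul3 x y = (0, 0, F₁)) (hyx : smul3 y x = (0, 0, F₂)) : F₁ ⊆ F₂ := by
  obtain ⟨p, q, G⟩ := x
  obtain ⟨r, s, H⟩ := y
  simp only [smul3] at h₁ h₂ hxy hyx
  -- the coordinates force `x = (0, 0, G)`, and then `F₁ ⊆ G ⊆ F₂`
  split_ifs at h₁ h₂ hxy hyx <;> simp only [Prod.mk.injEq] at h₁ h₂ hxy hyx <;> try omega
  all_goals exact hxy.2.2 ▸ Set.inter_subset_left.trans (Set.inter_eq_left.mp h₂.2.2)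

def PreservesSmul3 {𝓕 : Set (Set ℤ)} (g : {x : ℤ × ℤ × Set ℤ // x ∈ Scar 𝓕} → ℤ × ℤ) : Prop :=
  ∀ a b c : {x : ℤ × ℤ × Set ℤ // x ∈ Scar 𝓕},
    (c : ℤ × ℤ × Set ℤ) = smul3 a b → g c = bmul (g a) (g b)

section Isomorphism

variable {𝓕 : Set (Set ℤ)} {g : {x : ℤ × ℤ × Set ℤ // x ∈ Scar 𝓕} → ℤ × ℤ}

lemma PreservesSmul3.smul3_eq (hg : PreservesSmul3 g) (h𝓕 : OmegaClosed 𝓕)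
    (hinj : Function.Injective g) {a b c : {x : ℤ × ℤ × Set ℤ // x ∈ Scar 𝓕}}
    (habc : bmul (g a) (g b) = g c) : smul3 a b = c :=
  congrArg Subtype.val <| hinj <| (hg a b ⟨_, smul3_mem_scar h𝓕 a.2 b.2⟩ rfl).trans habc

lemma PreservesSmul3.exists_map_diag (hg : PreservesSmul3 g) {F : Set ℤ} (hF : F ∈ 𝓕) (k : ℤ) :
    ∃ d, g ⟨(k, k, F), hF⟩ = (d, d) := by
  have hidem := hg ⟨_, hF⟩ ⟨_, hF⟩ ⟨_, hF⟩ (smul3_diag_self k F).symm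
  exact ⟨_, Prod.ext rfl (fst_eq_snd_of_bmul_self hidem.symm).symm⟩

lemma PreservesSmul3.add_one_mem (hg : PreservesSmul3 g) (h𝓕 : OmegaClosed 𝓕)
    (hinj : Function.Injective g) {F : Set ℤ} (hF : F ∈ 𝓕) {i : ℤ} (hi : i ∈ F) : i + 1 ∈ F := by
  let e : {x : ℤ × ℤ × Set ℤ // x ∈ Scar 𝓕} := ⟨(1, 1, F), hF⟩
  let f : {x : ℤ × ℤ × Set ℤ // x ∈ Scar 𝓕} := ⟨(0, 0, F), hF⟩
  obtain ⟨a, ha⟩ := hg.exists_map_diag hF 1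
  obtain ⟨b, hb⟩ := hg.exists_map_diag hF 0
  have hab : a ≠ b := by
    rintro rfl
    simpa [e, f] using congrArg Subtype.val (hinj (ha.trans hb.symm))
  have hef : bmul (g e) (g f) = (max a b, max a b) := by rw [ha, hb, bmul_diag_diag]
  rcases lt_or_gt_of_ne hab with hlt | hgt
  · -- the product would be `(0, 0, F)`, but its first coordinate is `1`
    rw [max_eq_right hlt.le, ← hb] at hef
    simpa [e, f, smul3_one_zero] using hg.smul3_eq h𝓕 hinj hef
  · rw [max_eq_left hgt.le, ← ha] at hef
    have hprod := hg.smul3_eq h𝓕 hinj hef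
    simp only [e, f, smul3_one_zero, Prod.mk.injEq, true_and] at hprod
    exact add_one_mem_of_inter_zshift_eq hprod hi

lemma PreservesSmul3.subset (hg : PreservesSmul3 g) (h𝓕 : OmegaClosed 𝓕)
    (hbij : Function.Bijective g) {F₁ F₂ : Set ℤ} (h₁ : F₁ ∈ 𝓕) (h₂ : F₂ ∈ 𝓕) : F₁ ⊆ F₂ := by
  obtain ⟨a, ha⟩ := hg.exists_map_diag h₁ 0
  obtain ⟨b, hb⟩ := hg.exists_map_diag h₂ 0
  obtain ⟨x, hx⟩ := hbij.2 (a, b)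
  obtain ⟨y, hy⟩ := hbij.2 (b, a)
  let e : {x : ℤ × ℤ × Set ℤ // x ∈ Scar 𝓕} := ⟨(0, 0, F₁), h₁⟩
  let f : {x : ℤ × ℤ × Set ℤ // x ∈ Scar 𝓕} := ⟨(0, 0, F₂), h₂⟩
  have hsmul := fun u v w (huvw : bmul (g u) (g v) = g w) => hg.smul3_eq h𝓕 hbij.1 huvw
  refine subset_of_smul3_dRel (hsmul e x x ?_) (hsmul x f x ?_) (hsmul x y e ?_) (hsmul y x f ?_) <;>
    simp [e, f, ha, hb, hx, hy, bmul]

lemma PreservesSmul3.exists_eq_singleton (hg : PreservesSmul3 g) (h𝓕 : OmegaClosed 𝓕)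
    (hbij : Function.Bijective g) (hempty : (∅ : Set ℤ) ∉ 𝓕) :
    ∃ F : Set ℤ, 𝓕 = {F} ∧ F.Nonempty ∧ ∀ i ∈ F, i + 1 ∈ F := by
  obtain ⟨⟨⟨_, _, F⟩, hF⟩, -⟩ := hbij.2 (0, 0)
  refine ⟨F, Set.eq_singleton_iff_unique_mem.mpr ⟨hF, fun G hG => ?_⟩, ?_,
    fun i => hg.add_one_mem h𝓕 hbij.1 hF⟩
  · exact (hg.subset h𝓕 hbij hG hF).antisymm (hg.subset h𝓕 hbij hF hG)
  · exact Set.nonempty_iff_ne_empty.mpr fun hF₀ => hempty (hF₀ ▸ hF)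

end Isomorphism

lemma preservesSmul3_proj (𝓕 : Set (Set ℤ)) :
    PreservesSmul3 fun a : {x : ℤ × ℤ × Set ℤ // x ∈ Scar 𝓕} => (a.1.1, a.1.2.1) := by
  rintro a b c hc
  dsimp only
  rw [hc]
  exact (bmul_proj_smul3 a b).symm

lemma bijective_proj_scar_singleton (F : Set ℤ) :
    Function.Bijective fun a : {x : ℤ × ℤ × Set ℤ // x ∈ Scar {F}} => (a.1.1, a.1.2.1) := by
  refine ⟨?_, fun p => ⟨⟨(p.1, p.2, F), rfl⟩, rfl⟩⟩
  rintro ⟨⟨i, j, A⟩, hA : A = F⟩ ⟨⟨i', j', B⟩, hB : B = F⟩ h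
  subst hA hB
  simp_all

/-- when `∅ ∉ 𝓕`, `S(𝓕)` is isomorphic to the extended bicyclic
semigroup `B_ℤ` iff `𝓕 = {F}` for a single nonempty inductive subset `F` of `ℕ`. -/
theorem stmt14 (𝓕 : Set (Set ℤ)) (h : OmegaClosed 𝓕) (hempty : (∅ : Set ℤ) ∉ 𝓕) :
    (∃ g : {x : ℤ × ℤ × Set ℤ // x ∈ Scar 𝓕} → ℤ × ℤ, Function.Bijective g ∧
      ∀ a b c : {x : ℤ × ℤ × Set ℤ // x ∈ Scar 𝓕},
        (c : ℤ × ℤ × Set ℤ) = smul3 a b → g c = bmul (g a) (g b)) ↔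
    (∃ F : Set ℤ, 𝓕 = {F} ∧ F.Nonempty ∧ ∀ i ∈ F, i + 1 ∈ F) := by
  constructor
  · rintro ⟨g, hbij, hg⟩
    exact PreservesSmul3.exists_eq_singleton hg h hbij hempty
  · rintro ⟨F, rfl, -, -⟩
    exact ⟨_, bijective_proj_scar_singleton F, preservesSmul3_proj {F}⟩
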